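/- The total expected squared error of the truncation-aware matrix mechanism over a workload matrix W with rows w₁,…,w_p is ‖W(D−T)x‖₂² + (2(ΔA)²/ε²) · Tr(WT(AᵀA)⁻¹TᵀWᵀ). -/

import Mathlib

/-!
With `c = W(D - T)x`, `M = WT(AᵀA)⁻¹Aᵀ` and `s = ΔA/ε`, the error on query `i` is
`cᵢ - ⟨s Mᵢ, b⟩`. As the `bⱼ` are independent and centred with variance 2, its second moment is
`cᵢ² + 2s²‖Mᵢ‖²`, and `∑ᵢ ‖Mᵢ‖² = Tr(MMᵀ) = Tr(WT(AᵀA)⁻¹TᵀWᵀ)` because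
`A⁺A⁺ᵀ = (AᵀA)⁻¹` for the left inverse `A⁺ = (AᵀA)⁻¹Aᵀ`.
-/

open MeasureTheory Matrix ProbabilityTheory

namespace ProbabilityTheory

variable {Ω ι : Type*} [MeasurableSpace Ω] {μ : Measure Ω} [Fintype ι] {b : ι → Ω → ℝ}

lemma iIndepFun.variance_dotProduct (hindep : iIndepFun b μ) (hL2 : ∀ j, MemLp (b j) 2 μ)
    (v : ι → ℝ) :
    Var[fun ω ↦ v ⬝ᵥ fun j ↦ b j ω; μ] = ∑ j, v j ^ 2 * Var[b j; μ] := by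
  have hsum : (fun ω ↦ v ⬝ᵥ fun j ↦ b j ω) = ∑ j, fun ω ↦ v j * b j ω := by
    ext ω; simp [dotProduct]
  rw [hsum, IndepFun.variance_sum (fun j _ ↦ (hL2 j).const_mul (v j))]
  · simp only [variance_const_mul]
  · intro j _ k _ hjk
    exact (hindep.indepFun hjk).comp (measurable_const_mul (v j)) (measurable_const_mul (v k))

lemma integral_sq_eq_variance_add_sq [IsProbabilityMeasure μ] {X : Ω → ℝ} (hX : MemLp X 2 μ) :
    ∫ ω, X ω ^ 2 ∂μ = Var[X; μ] + (∫ ω, X ω ∂μ) ^ 2 := by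
  rw [variance_eq_sub hX]
  simp

lemma iIndepFun.integral_sq_const_sub_dotProduct [IsProbabilityMeasure μ]
    (hindep : iIndepFun b μ) (hL2 : ∀ j, MemLp (b j) 2 μ) (hmean : ∀ j, ∫ ω, b j ω ∂μ = 0)
    {σ2 : ℝ} (hvar : ∀ j, ∫ ω, b j ω ^ 2 ∂μ = σ2) (c : ℝ) (v : ι → ℝ) :
    ∫ ω, (c - v ⬝ᵥ fun j ↦ b j ω) ^ 2 ∂μ = c ^ 2 + σ2 * (v ⬝ᵥ v) := by
  have hS : MemLp (fun ω ↦ v ⬝ᵥ fun j ↦ b j ω) 2 μ := by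
    simpa [dotProduct] using memLp_finsetSum Finset.univ fun j _ ↦ (hL2 j).const_mul (v j)
  have hvarb : ∀ j, Var[b j; μ] = σ2 := fun j ↦ by
    rw [variance_eq_sub (hL2 j)]; simp [hmean, hvar]
  have hmeanS : ∫ ω, (v ⬝ᵥ fun j ↦ b j ω) ∂μ = 0 := by
    simp [dotProduct, integral_finsetSum _ fun j _ ↦ ((hL2 j).integrable one_le_two).const_mul _,
      integral_const_mul, hmean]
  have hY : MemLp (fun ω ↦ c - v ⬝ᵥ fun j ↦ b j ω) 2 μ := (memLp_const c).sub hS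
  rw [integral_sq_eq_variance_add_sq hY, variance_const_sub hS.1,
    hindep.variance_dotProduct hL2, integral_sub (integrable_const c) (hS.integrable one_le_two),
    hmeanS]
  simp [hvarb, dotProduct, Finset.mul_sum, sq, mul_comm, add_comm]

end ProbabilityTheory

lemma Matrix.trace_mul_transpose_self {m n R : Type*} [Fintype m] [Fintype n] [CommSemiring R]
    (M : Matrix m n R) : (M * Mᵀ).trace = ∑ i, M i ⬝ᵥ M i := rfl

lemma Matrix.leftInv_mul_transpose_leftInv {m n R : Type*} [Fintype m] [Fintype n]
    [DecidableEq n] [CommRing R] (A : Matrix m n R) [Invertible (Aᵀ * A)] :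
    (Aᵀ * A)⁻¹ * Aᵀ * ((Aᵀ * A)⁻¹ * Aᵀ)ᵀ = (Aᵀ * A)⁻¹ := by
  have hsymm : ((Aᵀ * A)⁻¹)ᵀ = (Aᵀ * A)⁻¹ := by
    rw [transpose_nonsing_inv, transpose_mul, transpose_transpose]
  rw [transpose_mul, transpose_transpose, hsymm, Matrix.mul_assoc, ← Matrix.mul_assoc Aᵀ,
    ← Matrix.mul_assoc, inv_mul_of_invertible, Matrix.one_mul]

theorem TaMM_total_error_general
    {Ω : Type*} [MeasurableSpace Ω] (μ : Measure Ω) [IsProbabilityMeasure μ]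
    {m n p : ℕ} (b : Fin m → Ω → ℝ)
    (hindep : ProbabilityTheory.iIndepFun b μ)
    (hL2 : ∀ j, MemLp (b j) 2 μ)
    (hmean : ∀ j, ∫ ω, b j ω ∂μ = 0)
    (hvar : ∀ j, ∫ ω, (b j ω) ^ 2 ∂μ = 2)
    (x : Fin n → ℝ) (D T : Matrix (Fin n) (Fin n) ℝ)
    (W : Matrix (Fin p) (Fin n) ℝ)
    (A : Matrix (Fin m) (Fin n) ℝ) (hA : Invertible (Aᵀ * A))
    (ΔA ε : ℝ) :
    ∑ i : Fin p,
        ∫ ω, ((W i ⬝ᵥ (D *ᵥ x)) -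
              (W i ⬝ᵥ (T *ᵥ (x + (ΔA / ε) • (((Aᵀ * A)⁻¹ * Aᵀ) *ᵥ fun j => b j ω))))) ^ 2 ∂μ
      = (∑ i : Fin p, ((W * (D - T)) *ᵥ x) i ^ 2)
        + (2 * ΔA ^ 2 / ε ^ 2) * (W * T * (Aᵀ * A)⁻¹ * Tᵀ * Wᵀ).trace := by
  set P := (Aᵀ * A)⁻¹ * Aᵀ
  set M := W * T * P
  have herr (i : Fin p) (y : Fin m → ℝ) :
      W i ⬝ᵥ (D *ᵥ x) - W i ⬝ᵥ (T *ᵥ (x + (ΔA / ε) • (P *ᵥ y)))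
        = ((W * (D - T)) *ᵥ x) i - ((ΔA / ε) • M) i ⬝ᵥ y := by
    have hvec : W *ᵥ (D *ᵥ x) - W *ᵥ (T *ᵥ (x + (ΔA / ε) • (P *ᵥ y)))
        = (W * (D - T)) *ᵥ x - ((ΔA / ε) • M) *ᵥ y := by
      simp only [M, mulVec_add, mulVec_smul, smul_mulVec, ← mulVec_mulVec, sub_mulVec, mulVec_sub]
      abel
    exact congrFun hvec i
  have hnoise : W * T * (Aᵀ * A)⁻¹ * Tᵀ * Wᵀ = M * Mᵀ := by
    rw [← leftInv_mul_transpose_leftInv A]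
    simp only [M, P, transpose_mul, Matrix.mul_assoc]
  simp_rw [herr, hindep.integral_sq_const_sub_dotProduct hL2 hmean hvar, Finset.sum_add_distrib,
    hnoise, trace_mul_transpose_self, Finset.mul_sum]
  congr 1
  refine Finset.sum_congr rfl fun i _ ↦ ?_
  rw [show ((ΔA / ε) • M) i = (ΔA / ε) • M i from rfl, smul_dotProduct, dotProduct_smul,
    smul_eq_mul, smul_eq_mul]
  ring

/-- Total expected squared error of the truncation-aware matrix mechanism
`WT(x + (ΔA/ε) A⁺ b)` over a workload `W` with `p` rows:
`‖W(D−T)x‖₂² + (2(ΔA)²/ε²) · Tr(WT(AᵀA)⁻¹TᵀWᵀ)`. -/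
theorem TaMM_total_error
    {Ω : Type*} [MeasurableSpace Ω] (μ : Measure Ω) [IsProbabilityMeasure μ]
    {m n p : ℕ} (b : Fin m → Ω → ℝ)
    (hmeas : ∀ j, Measurable (b j))
    (hindep : ProbabilityTheory.iIndepFun b μ)
    (hL2 : ∀ j, MemLp (b j) 2 μ)
    (hmean : ∀ j, ∫ ω, b j ω ∂μ = 0)
    (hvar : ∀ j, ∫ ω, (b j ω) ^ 2 ∂μ = 2)
    (x : Fin n → ℝ) (D T : Matrix (Fin n) (Fin n) ℝ)
    (W : Matrix (Fin p) (Fin n) ℝ)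
    (A : Matrix (Fin m) (Fin n) ℝ) (hA : Invertible (Aᵀ * A))
    (ΔA ε : ℝ) (hΔA : 0 < ΔA) (hε : 0 < ε) :
    ∑ i : Fin p,
        ∫ ω, ((W i ⬝ᵥ (D *ᵥ x)) -
              (W i ⬝ᵥ (T *ᵥ (x + (ΔA / ε) • (((Aᵀ * A)⁻¹ * Aᵀ) *ᵥ fun j => b j ω))))) ^ 2 ∂μ
      = (∑ i : Fin p, ((W * (D - T)) *ᵥ x) i ^ 2)
        + (2 * ΔA ^ 2 / ε ^ 2) * (W * T * (Aᵀ * A)⁻¹ * Tᵀ * Wᵀ).trace :=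
  TaMM_total_error_general μ b hindep hL2 hmean hvar x D T W A hA ΔA ε
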